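/- arXiv:2003.13061 — 7 statements merged into one kernel-verified Lean document; each statement's English description precedes it below -/
import Mathlib

section
/- A relative ideal I of a numerical semigroup S is canonical (i.e., I is a ℤ-translate of the standard canonical ideal K(S)) if and only if its type t(I) = |PF(I)| equals 1. -/
open Set Pointwise

def IsNumSgrp (S : Set ℤ) : Prop :=
  0 ∈ S ∧ (∀ a ∈ S, ∀ b ∈ S, a + b ∈ S) ∧ (∀ a ∈ S, 0 ≤ a) ∧ ∃ c : ℤ, ∀ z, c ≤ z → z ∈ S

def maxId (S : Set ℤ) : Set ℤ := S \ {0}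

def subI (I J : Set ℤ) : Set ℤ := {x : ℤ | ∀ j ∈ J, x + j ∈ I}

def PF (S I : Set ℤ) : Set ℤ := subI I (maxId S) \ I

def stdK (S : Set ℤ) (F : ℤ) : Set ℤ := {x : ℤ | 0 ≤ x ∧ F - x ∉ S}

def IsFrobOf (I : Set ℤ) (FI : ℤ) : Prop := FI ∉ I ∧ ∀ z : ℤ, FI < z → z ∈ I

def IsRelIdeal (S I : Set ℤ) : Prop :=
  I.Nonempty ∧ (∀ i ∈ I, ∀ s ∈ S, i + s ∈ I) ∧ ∃ z ∈ S, ∀ i ∈ I, z + i ∈ S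

def tilde (I : Set ℤ) (d : ℤ) : Set ℤ := (fun x => x + d) '' I

def IsAlmostCanonical (S : Set ℤ) (F : ℤ) (I : Set ℤ) : Prop :=
  ∃ FI : ℤ, IsFrobOf I FI ∧ subI (tilde I (F - FI)) (maxId S) = stdK S F ∪ {F}

def IsMinGen (S : Set ℤ) (x : ℤ) : Prop := x ∈ maxId S \ (maxId S + maxId S)

def IsMult (S : Set ℤ) (e : ℤ) : Prop := e ∈ maxId S ∧ ∀ m ∈ maxId S, e ≤ m

def genK (S : Set ℤ) (F : ℤ) : Set ℤ := (AddSubmonoid.closure (stdK S F) : Set ℤ)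

def nK (K : Set ℤ) : ℕ → Set ℤ
  | 0 => {0}
  | 1 => K
  | n + 2 => nK K (n + 1) + K

def IsGAS (S : Set ℤ) (F : ℤ) : Prop :=
  stdK S F + stdK S F = stdK S F ∨
  ∃ X : Finset ℤ, (∀ x ∈ X, IsMinGen S x) ∧ (∀ x ∈ X, ∀ y ∈ X, x - y ∉ PF S S) ∧
    (stdK S F + stdK S F) \ stdK S F = (fun x => F - x) '' (X : Set ℤ) ∪ {F}

def IsAlmostSym (S : Set ℤ) (F : ℤ) : Prop := subI S (maxId S) = stdK S F ∪ {F}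

def apery (I : Set ℤ) (e : ℤ) : Set ℤ := {i ∈ I | i - e ∉ I}

/-
For a relative ideal `I` with Frobenius number `g`, the element `g` is always pseudo-Frobenius.
If it is the only one, then `I ⊆ (g - F) + K` because `g ∉ I + S`; conversely, if `(g - F) + K ⊄ I`,
the largest element of `(g - F) + K` outside `I` is pseudo-Frobenius, hence equal to `g`, which would
force `F ∈ K`. For the other direction, `PF` commutes with translations and `PF(K) = {F}`.
-/

lemma mem_image_add_left_iff {I : Set ℤ} {x z : ℤ} : z ∈ (fun k => x + k) '' I ↔ z - x ∈ I := by
  rw [Set.image_add_left, mem_preimage, neg_add_eq_sub]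

namespace IsNumSgrp

variable {S : Set ℤ}

lemma nonneg (hS : IsNumSgrp S) {a : ℤ} (ha : a ∈ S) : 0 ≤ a := hS.2.2.1 a ha

lemma one_le_of_mem_maxId (hS : IsNumSgrp S) {m : ℤ} (hm : m ∈ maxId S) : 1 ≤ m := by
  have : m ≠ 0 := hm.2
  have := hS.nonneg hm.1
  omega

lemma neg_one_le_of_isFrobOf (hS : IsNumSgrp S) {F : ℤ} (hF : IsFrobOf S F) : -1 ≤ F := by
  by_contra! h
  have := hS.nonneg (hF.2 (-1) h)
  omega

end IsNumSgrp

lemma PF_image_add_left (S I : Set ℤ) (x : ℤ) :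
    PF S ((fun k => x + k) '' I) = (fun k => x + k) '' PF S I := by
  ext z
  simp only [PF, subI, mem_sdiff, mem_ofPred_eq, mem_image_add_left_iff, add_sub_right_comm]

lemma stdK_add_mem {S : Set ℤ} (hS : IsNumSgrp S) {F x s : ℤ} (hx : x ∈ stdK S F) (hs : s ∈ S) :
    x + s ∈ stdK S F := by
  refine ⟨add_nonneg hx.1 (hS.nonneg hs), fun h => hx.2 ?_⟩
  convert hS.2.1 _ h _ hs using 1
  ring

lemma PF_stdK {S : Set ℤ} (hS : IsNumSgrp S) {F : ℤ} (hF : IsFrobOf S F) :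
    PF S (stdK S F) = {F} := by
  have hF1 := hS.neg_one_le_of_isFrobOf hF
  have hzero : F ∉ stdK S F := fun h => h.2 (by simpa using hS.1)
  ext x
  simp only [mem_singleton_iff]
  constructor
  · rintro ⟨hsub, hx⟩
    by_contra hxF
    by_cases hFx : F - x ∈ S
    · exact hzero (by simpa using hsub (F - x) ⟨hFx, sub_ne_zero.mpr (Ne.symm hxF)⟩)
    · have hx0 : 0 ≤ x := by
        by_contra! hneg
        exact hFx (hF.2 _ (by omega))
      exact hx ⟨hx0, hFx⟩
  · rintro rfl
    refine ⟨fun m hm => ⟨?_, fun h => ?_⟩, hzero⟩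
    · have := hS.one_le_of_mem_maxId hm
      omega
    · have := hS.nonneg h
      have := hS.one_le_of_mem_maxId hm
      omega

lemma IsRelIdeal.exists_isFrobOf {S I : Set ℤ} (hS : IsNumSgrp S) (hI : IsRelIdeal S I) :
    ∃ g, IsFrobOf I g := by
  obtain ⟨⟨i, hi⟩, hadd, z, -, hz⟩ := hI
  obtain ⟨c, hc⟩ := hS.2.2.2
  have hbdd : ∃ b : ℤ, ∀ w, w ∉ I → w ≤ b := by
    refine ⟨i + c, fun w hw => ?_⟩
    by_contra! hlt
    exact hw (by simpa using hadd i hi (w - i) (hc _ (by omega)))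
  have hne : ∃ w : ℤ, w ∉ I := by
    refine ⟨-z - 1, fun h => ?_⟩
    have := hS.nonneg (hz _ h)
    omega
  obtain ⟨g, hg, hmax⟩ := Int.exists_greatest_of_bdd hbdd hne
  exact ⟨g, hg, fun w hw => by_contra fun h => absurd (hmax w h) (not_le.mpr hw)⟩

lemma IsFrobOf.mem_PF {S I : Set ℤ} (hS : IsNumSgrp S) {g : ℤ} (hg : IsFrobOf I g) :
    g ∈ PF S I :=
  ⟨fun m hm => hg.2 _ (by have := hS.one_le_of_mem_maxId hm; omega), hg.1⟩

lemma exists_mem_PF_of_not_subset {S I J : Set ℤ} (hS : IsNumSgrp S) {g : ℤ} (hg : IsFrobOf I g)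
    (hJ : ∀ j ∈ J, ∀ s ∈ S, j + s ∈ J) (hJI : ¬ J ⊆ I) : ∃ z ∈ J, z ∈ PF S I := by
  have hne : ∃ w, w ∈ J ∧ w ∉ I := not_subset.mp hJI
  have hbdd : ∃ b : ℤ, ∀ w, w ∈ J ∧ w ∉ I → w ≤ b :=
    ⟨g, fun w hw => by_contra fun h => hw.2 (hg.2 w (not_le.mp h))⟩
  obtain ⟨z, ⟨hzJ, hzI⟩, hmax⟩ := Int.exists_greatest_of_bdd hbdd hne
  refine ⟨z, hzJ, fun m hm => by_contra fun h => ?_, hzI⟩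
  have := hmax (z + m) ⟨hJ z hzJ m hm.1, h⟩
  have := hS.one_le_of_mem_maxId hm
  omega

lemma subset_image_add_stdK {S I : Set ℤ} {F g : ℤ} (hF : IsFrobOf S F) (hg : IsFrobOf I g)
    (hadd : ∀ i ∈ I, ∀ s ∈ S, i + s ∈ I) : I ⊆ (fun k => (g - F) + k) '' stdK S F := by
  intro w hw
  have hgw : g - w ∉ S := fun h => hg.1 (by simpa using hadd w hw _ h)
  rw [mem_image_add_left_iff]
  refine ⟨?_, by rwa [show F - (w - (g - F)) = g - w by ring]⟩
  by_contra! h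
  exact hgw (hF.2 _ (by omega))

lemma image_add_stdK_subset_of_PF_eq {S I : Set ℤ} (hS : IsNumSgrp S) {F g : ℤ}
    (hg : IsFrobOf I g) (hPF : PF S I = {g}) : (fun k => (g - F) + k) '' stdK S F ⊆ I := by
  by_contra hsub
  have hJ : ∀ j ∈ (fun k => (g - F) + k) '' stdK S F, ∀ s ∈ S,
      j + s ∈ (fun k => (g - F) + k) '' stdK S F := by
    intro j hj s hs
    rw [mem_image_add_left_iff] at hj ⊢
    simpa only [add_sub_right_comm] using stdK_add_mem hS hj hs
  obtain ⟨z, hzK, hzPF⟩ := exists_mem_PF_of_not_subset hS hg hJ hsub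
  rw [hPF, mem_singleton_iff] at hzPF
  subst hzPF
  rw [mem_image_add_left_iff, sub_sub_cancel] at hzK
  exact hzK.2 (by simpa using hS.1)

theorem stmt1_general (S : Set ℤ) (hS : IsNumSgrp S) (F : ℤ) (hF : IsFrobOf S F)
    (I : Set ℤ) (hI : IsRelIdeal S I) :
    (∃ x : ℤ, I = (fun k => x + k) '' stdK S F) ↔ (PF S I).ncard = 1 := by
  constructor
  · rintro ⟨x, rfl⟩
    rw [PF_image_add_left, PF_stdK hS hF, image_singleton, ncard_singleton]
  · intro h
    obtain ⟨g, hg⟩ := hI.exists_isFrobOf hS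
    have hPF : PF S I = {g} := by
      obtain ⟨f, hf⟩ := ncard_eq_one.mp h
      have := hg.mem_PF hS
      rw [hf, mem_singleton_iff] at this
      rwa [← this] at hf
    exact ⟨g - F, (subset_image_add_stdK hF hg hI.2.1).antisymm
      (image_add_stdK_subset_of_PF_eq hS hg hPF)⟩

theorem stmt1 (S : Set ℤ) (hS : IsNumSgrp S) (F : ℤ) (hF : IsFrobOf S F) (hFpos : 0 < F)
    (I : Set ℤ) (hI : IsRelIdeal S I) :
    (∃ x : ℤ, I = (fun k => x + k) '' stdK S F) ↔ (PF S I).ncard = 1 :=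
  stmt1_general S hS F hF I hI
end

section
/- For a numerical semigroup S with canonical ideal K and maximal ideal M, one has K − M = K ∪ {F(S)}. In particular every canonical ideal of S is almost canonical. -/
open Set Pointwise

/-!
`K − M ⊆ K ∪ {F}`: if `x ∈ K − M` with `x ≠ F` and `F − x ∈ S`, then `F − x ∈ M`, so
`F = x + (F − x) ∈ K`, which is absurd as `0 ∈ S`; hence `F − x ∉ S`, which forces `x ≥ 0`, i.e.
`x ∈ K`. Conversely `K` is an `S`-ideal and `F + m > F` lies in `K` for every `m ∈ M`.
A translate `x + K` has Frobenius number `x + F`, and normalising it gives back `K`.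
-/

namespace IsFrobOf

variable {I : Set ℤ} {FI : ℤ}

theorem le_of_notMem (hI : IsFrobOf I FI) {z : ℤ} (hz : z ∉ I) : z ≤ FI :=
  not_lt.mp fun h => hz (hI.2 z h)

theorem image_add (hI : IsFrobOf I FI) (x : ℤ) :
    IsFrobOf ((fun k => x + k) '' I) (x + FI) := by
  refine ⟨?_, fun z hz => ⟨z - x, hI.2 _ (by omega), by ring⟩⟩
  rintro ⟨k, hk, hkx⟩
  exact hI.1 (by rwa [add_left_cancel hkx] at hk)

end IsFrobOf

theorem tilde_image_add_neg (I : Set ℤ) (x : ℤ) : tilde ((fun k => x + k) '' I) (-x) = I := by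
  simp only [tilde, image_image, add_neg_cancel_comm, image_id']

section Canonical

variable {S : Set ℤ} {F : ℤ} (hS : IsNumSgrp S) (hF : IsFrobOf S F)
include hS hF

theorem IsFrobOf.neg_one_le : -1 ≤ F := by
  have := hS.2.2.1 _ (hF.2 (F + 1) (lt_add_one F))
  omega

theorem mem_stdK_of_lt {z : ℤ} (hz : F < z) : z ∈ stdK S F :=
  ⟨by linarith [hF.neg_one_le hS], fun h => by linarith [hS.2.2.1 _ h]⟩

omit hF in
theorem frob_notMem_stdK : F ∉ stdK S F :=
  fun h => h.2 (by simpa using hS.1)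

theorem isFrobOf_stdK : IsFrobOf (stdK S F) F :=
  ⟨frob_notMem_stdK hS, fun _ => mem_stdK_of_lt hS hF⟩

omit hF in
theorem add_mem_stdK {x s : ℤ} (hx : x ∈ stdK S F) (hs : s ∈ S) : x + s ∈ stdK S F :=
  ⟨by linarith [hx.1, hS.2.2.1 s hs], fun h => hx.2 (by
    simpa [sub_add_cancel, sub_add_eq_sub_sub] using hS.2.1 _ h _ hs)⟩

theorem subI_stdK_maxId : subI (stdK S F) (maxId S) = stdK S F ∪ {F} := by
  ext x
  constructor
  · intro hx
    by_cases hxF : x = F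
    · exact Or.inr hxF
    have hFx : F - x ∉ S := fun h =>
      frob_notMem_stdK hS (by simpa using hx (F - x) ⟨h, fun h0 => hxF (by rw [mem_singleton_iff] at h0; omega)⟩)
    exact Or.inl ⟨by linarith [hF.le_of_notMem hFx], hFx⟩
  · rintro (hK | rfl) m ⟨hmS, hm0⟩
    · exact add_mem_stdK hS hK hmS
    · have := hS.2.2.1 m hmS
      exact mem_stdK_of_lt hS hF (by rw [mem_singleton_iff] at hm0; omega)

end Canonical

theorem stmt2_general (S : Set ℤ) (hS : IsNumSgrp S) (F : ℤ) (hF : IsFrobOf S F) :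
    subI (stdK S F) (maxId S) = stdK S F ∪ {F} ∧
    ∀ I : Set ℤ, IsRelIdeal S I → (∃ x : ℤ, I = (fun k => x + k) '' stdK S F) →
      IsAlmostCanonical S F I := by
  refine ⟨subI_stdK_maxId hS hF, fun I _ ⟨x, hI⟩ => ⟨x + F, ?_, ?_⟩⟩
  · rw [hI]
    exact (isFrobOf_stdK hS hF).image_add x
  · rw [hI, show F - (x + F) = -x by ring, tilde_image_add_neg, subI_stdK_maxId hS hF]

theorem stmt2 (S : Set ℤ) (hS : IsNumSgrp S) (F : ℤ) (hF : IsFrobOf S F) (hFpos : 0 < F) :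
    subI (stdK S F) (maxId S) = stdK S F ∪ {F} ∧
    ∀ I : Set ℤ, IsRelIdeal S I → (∃ x : ℤ, I = (fun k => x + k) '' stdK S F) →
      IsAlmostCanonical S F I :=
  stmt2_general S hS F hF
end

section
/- For every relative ideal I of a numerical semigroup S, the inequality g(I) + g(S) ≥ F(S) + t(I) holds, where g(I) = |ℕ \ Ĩ|, g(S) = |ℕ \ S|, and t(I) = |PF(I)|; and equality holds if and only if I is almost canonical. -/
open Set Pointwise

/-!
Shift `I` to `J = Ĩ`, whose Frobenius number is `F(S)`, and let `K' = K ∪ {F(S)}`. Then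
`J ⊆ J − M ⊆ K'`, and inside `[0, F(S)]` the complement of `S` is mirrored onto `K` by
`x ↦ F(S) − x`; counting in this interval gives `g(J) + g(S) = F(S) + |K' \ J|`. Splitting
`K' \ J = (K' \ (J − M)) ∪ ((J − M) \ J)`, the second part is a shift of `PF(I)`, so
`g(I) + g(S) = F(S) + t(I) + |K' \ (J − M)|`, and the defect vanishes exactly when `J − M = K'`.
-/

def gaps (J : Set ℤ) : Set ℤ := {x | 0 ≤ x ∧ x ∉ J}

lemma gaps_eq_Ici_sdiff (J : Set ℤ) : gaps J = Ici 0 \ J := rfl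

lemma IsFrobOf.unique {I : Set ℤ} {a b : ℤ} (ha : IsFrobOf I a) (hb : IsFrobOf I b) :
    a = b := by
  by_contra h
  rcases lt_or_gt_of_ne h with h | h
  · exact hb.1 (ha.2 b h)
  · exact ha.1 (hb.2 a h)

section tilde

variable {I : Set ℤ} {d : ℤ}

lemma mem_tilde {x : ℤ} : x ∈ tilde I d ↔ x - d ∈ I := by
  simp [tilde, sub_eq_add_neg]

lemma ncard_tilde (I : Set ℤ) (d : ℤ) : (tilde I d).ncard = I.ncard :=
  ncard_image_of_injective I (add_left_injective d)

lemma IsFrobOf.tilde {FI : ℤ} (h : IsFrobOf I FI) : IsFrobOf (tilde I d) (FI + d) := by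
  refine ⟨fun hF => h.1 ?_, fun z hz => mem_tilde.2 (h.2 _ (by omega))⟩
  simpa using mem_tilde.1 hF

lemma tilde_add_mem {S : Set ℤ} (hI : ∀ i ∈ I, ∀ s ∈ S, i + s ∈ I) :
    ∀ x ∈ tilde I d, ∀ s ∈ S, x + s ∈ tilde I d := by
  intro x hx s hs
  rw [mem_tilde] at hx ⊢
  simpa [sub_add_eq_add_sub] using hI _ hx s hs

lemma subI_tilde (J : Set ℤ) : subI (tilde I d) J = tilde (subI I J) d := by
  ext x
  simp only [subI, mem_tilde, mem_ofPred_eq, sub_add_eq_add_sub]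

lemma subI_maxId_tilde_sdiff (S : Set ℤ) :
    subI (tilde I d) (maxId S) \ tilde I d = tilde (PF S I) d := by
  rw [subI_tilde, PF, tilde, tilde, tilde, image_sdiff (add_left_injective d)]

end tilde

lemma ncard_sdiff_eq_ncard_sdiff_add_ncard_sdiff {α : Type*} {A B C : Set α} (hAB : A ⊆ B)
    (hBC : B ⊆ C) (hfin : (C \ A).Finite) :
    (C \ A).ncard = (C \ B).ncard + (B \ A).ncard := by
  rw [← ncard_sdiff_add_ncard_of_subset (sdiff_subset_sdiff_left hBC) hfin,
    sdiff_sdiff_sdiff_cancel_right hAB]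

section Icc

variable {A B : Set ℤ} {F : ℤ}

lemma sdiff_subset_Icc (hB : ∀ x ∈ B, 0 ≤ x) (hA : ∀ z, F < z → z ∈ A) :
    B \ A ⊆ Icc 0 F :=
  fun x hx => ⟨hB x hx.1, not_lt.1 fun h => hx.2 (hA x h)⟩

lemma ncard_sdiff_add_ncard_inter_Icc (hAB : A ⊆ B) (hB : ∀ x ∈ B, 0 ≤ x)
    (hA : ∀ z, F < z → z ∈ A) :
    (B \ A).ncard + (A ∩ Icc 0 F).ncard = (B ∩ Icc 0 F).ncard := by
  have hBA : B \ A = (B ∩ Icc 0 F) \ (A ∩ Icc 0 F) := by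
    ext x
    have hx : x ∈ B \ A → x ∈ Icc 0 F := fun h => sdiff_subset_Icc hB hA h
    simp only [mem_sdiff, mem_inter_iff] at hx ⊢
    tauto
  rw [hBA]
  exact ncard_sdiff_add_ncard_of_subset (inter_subset_inter_left _ hAB)
    ((finite_Icc 0 F).inter_of_right _)

end Icc

section canonical

variable {S J : Set ℤ} {F : ℤ}

lemma subset_subI_maxId (hJ : ∀ x ∈ J, ∀ s ∈ S, x + s ∈ J) : J ⊆ subI J (maxId S) :=
  fun x hx _ hm => hJ x hx _ hm.1

lemma subI_maxId_subset_stdK_union (hF : ∀ z, F < z → z ∈ S) (hFJ : F ∉ J) :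
    subI J (maxId S) ⊆ stdK S F ∪ {F} := by
  intro x hx
  by_cases hxF : x = F
  · exact Or.inr hxF
  have hFx : F - x ∉ S := fun hFx =>
    hFJ (by simpa using hx (F - x) ⟨hFx, by simpa [sub_eq_zero] using Ne.symm hxF⟩)
  exact Or.inl ⟨not_lt.1 fun h => hFx (hF _ (by omega)), hFx⟩

lemma nonneg_of_mem_stdK_union (hF0 : 0 ≤ F) : ∀ x ∈ stdK S F ∪ {F}, 0 ≤ x := by
  rintro x (hx | rfl)
  exacts [hx.1, hF0]

lemma isAlmostCanonical_iff {I : Set ℤ} {FI : ℤ} (hFI : IsFrobOf I FI) :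
    IsAlmostCanonical S F I ↔ subI (tilde I (F - FI)) (maxId S) = stdK S F ∪ {F} := by
  refine ⟨fun ⟨FI', hFI', h⟩ => ?_, fun h => ⟨FI, hFI, h⟩⟩
  rwa [hFI'.unique hFI] at h

lemma stdK_inter_Icc (hF : ∀ z, F < z → z ∈ S) :
    stdK S F ∩ Icc 0 F = (F - ·) '' gaps S := by
  ext y
  constructor
  · rintro ⟨⟨-, hy⟩, -, hyF⟩
    exact ⟨F - y, ⟨by omega, hy⟩, by ring⟩
  · rintro ⟨x, ⟨hx0, hxS⟩, rfl⟩
    dsimp only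
    have hxF : x ≤ F := not_lt.1 fun h => hxS (hF x h)
    exact ⟨⟨by omega, by simpa using hxS⟩, by omega, by omega⟩

lemma ncard_stdK_union_inter_Icc (hS0 : 0 ∈ S) (hF : ∀ z, F < z → z ∈ S) (hF0 : 0 ≤ F) :
    ((stdK S F ∪ {F}) ∩ Icc 0 F).ncard = (gaps S).ncard + 1 := by
  have hFK : F ∉ stdK S F := fun h => h.2 (by simpa using hS0)
  have hfin : (gaps S).Finite := (finite_Icc 0 F).subset (sdiff_subset_Icc (fun _ => id) hF)
  rw [union_inter_distrib_right, singleton_inter_of_mem (show F ∈ Icc 0 F from ⟨hF0, le_rfl⟩),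
    union_singleton,
    ncard_insert_of_notMem (fun h => hFK h.1) ((stdK_inter_Icc hF).symm ▸ hfin.image _),
    stdK_inter_Icc hF, ncard_image_of_injective _ sub_right_injective]

end canonical

lemma ncard_gaps_add_ncard_gaps {S J : Set ℤ} {F : ℤ} (hS0 : 0 ∈ S)
    (hF : ∀ z, F < z → z ∈ S) (hF0 : 0 ≤ F) (hJK : J ⊆ stdK S F ∪ {F})
    (hJ : ∀ z, F < z → z ∈ J) :
    ((gaps J).ncard : ℤ) + (gaps S).ncard = F + ((stdK S F ∪ {F}) \ J).ncard := by
  have hK := nonneg_of_mem_stdK_union (S := S) hF0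
  have hgJ := ncard_sdiff_add_ncard_inter_Icc (B := Ici 0) (fun x hx => hK x (hJK hx))
    (fun _ => id) hJ
  have hKJ := ncard_sdiff_add_ncard_inter_Icc hJK hK hJ
  rw [ncard_stdK_union_inter_Icc hS0 hF hF0] at hKJ
  have hT : (Icc 0 F).ncard = (F + 1).toNat := by
    rw [← Finset.coe_Icc, ncard_coe_finset, Int.card_Icc, sub_zero]
  rw [inter_eq_right.2 Icc_subset_Ici_self, hT] at hgJ
  rw [gaps_eq_Ici_sdiff]
  omega

theorem stmt3 (S : Set ℤ) (hS : IsNumSgrp S) (F : ℤ) (hF : IsFrobOf S F) (hFpos : 0 < F)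
    (I : Set ℤ) (hI : IsRelIdeal S I) (FI : ℤ) (hFI : IsFrobOf I FI) :
    F + ((PF S I).ncard : ℤ) ≤ ({x : ℤ | 0 ≤ x ∧ x ∉ tilde I (F - FI)}.ncard : ℤ)
        + ({x : ℤ | 0 ≤ x ∧ x ∉ S}.ncard : ℤ) ∧
    (F + ((PF S I).ncard : ℤ) = ({x : ℤ | 0 ≤ x ∧ x ∉ tilde I (F - FI)}.ncard : ℤ)
        + ({x : ℤ | 0 ≤ x ∧ x ∉ S}.ncard : ℤ) ↔ IsAlmostCanonical S F I) := by
  set J := tilde I (F - FI)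
  have hJF : IsFrobOf J F := by simpa using hFI.tilde (d := F - FI)
  have hJL : J ⊆ subI J (maxId S) := subset_subI_maxId (tilde_add_mem hI.2.1)
  have hLK := subI_maxId_subset_stdK_union hF.2 hJF.1
  have hgaps := ncard_gaps_add_ncard_gaps hS.1 hF.2 hFpos.le (hJL.trans hLK) hJF.2
  have hfin := (finite_Icc 0 F).subset
    (sdiff_subset_Icc (nonneg_of_mem_stdK_union (S := S) hFpos.le) hJF.2)
  have hsplit := ncard_sdiff_eq_ncard_sdiff_add_ncard_sdiff hJL hLK hfin
  rw [subI_maxId_tilde_sdiff, ncard_tilde] at hsplit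
  have hdefect : ((stdK S F ∪ {F}) \ subI J (maxId S)).ncard = 0 ↔ IsAlmostCanonical S F I := by
    rw [isAlmostCanonical_iff hFI,
      ncard_eq_zero (hfin.subset (sdiff_subset_sdiff_right hJL)), sdiff_eq_empty]
    exact ⟨hLK.antisymm, fun h => h.ge⟩
  unfold gaps at hgaps
  rw [← hdefect]
  omega
end

section
/- If S is a GAS numerical semigroup with maximal embedding dimension e, then S is either almost symmetric, or 2-AGL with 2K \ K = {F(S) − e, F(S)}. -/
open Set Pointwise

/-!
With maximal embedding dimension the minimal generators are exactly `e` and the nonzero elements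
of the Apéry set `Ap(S, e)`, so `m₁ + m₂ - e ∈ S` for all `m₁, m₂ ∈ M`, and `x - e ∈ PF(S)` for
every minimal generator `x ≠ e`. In a GAS presentation `2K \ K = {F - x | x ∈ X} ∪ {F}` with
`X ≠ ∅`, translating `F - x` by `x - e` gives `F - e ∈ 2K \ K`, so `e ∈ X`, and the condition
`x - e ∉ PF(S)` leaves `X = {e}`. Adding an element of `K` to `F - e` or `F` lands in `K` or in
`{F - e, F}`, so `2K + K ⊆ 2K`, whence `⟨K⟩ = 2K` and `⟨K⟩ \ K = {F - e, F}`.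
-/

namespace IsNumSgrp

variable {S : Set ℤ}

lemma zero_mem (hS : IsNumSgrp S) : (0 : ℤ) ∈ S := hS.1

lemma add_mem (hS : IsNumSgrp S) {a b : ℤ} (ha : a ∈ S) (hb : b ∈ S) : a + b ∈ S := hS.2.1 a ha b hb

lemma notMem_of_neg (hS : IsNumSgrp S) {z : ℤ} (hz : z < 0) : z ∉ S :=
  fun h => (hS.nonneg h).not_gt hz

end IsNumSgrp

lemma mem_maxId {S : Set ℤ} {m : ℤ} : m ∈ maxId S ↔ m ∈ S ∧ m ≠ 0 := by
  simp [maxId]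

namespace IsMult

variable {S : Set ℤ} {e : ℤ}

lemma le (he : IsMult S e) {m : ℤ} (hm : m ∈ S) (hm0 : m ≠ 0) : e ≤ m :=
  he.2 m (mem_maxId.2 ⟨hm, hm0⟩)

lemma pos (he : IsMult S e) (hS : IsNumSgrp S) : 0 < e :=
  lt_of_le_of_ne (hS.nonneg he.1.1) (mem_maxId.1 he.1).2.symm

lemma notMem_of_lt (he : IsMult S e) {m : ℤ} (hm : m < e) (hm0 : m ≠ 0) : m ∉ S :=
  fun h => (he.le h hm0).not_gt hm

end IsMult

section Apery

variable {S : Set ℤ} {e : ℤ}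

lemma add_nsmul_mem_of_add_mem (hadd : ∀ s ∈ S, s + e ∈ S) {a : ℤ} (ha : a ∈ S) :
    ∀ n : ℕ, a + n • e ∈ S
  | 0 => by simpa
  | n + 1 => by
    rw [succ_nsmul, ← add_assoc]
    exact hadd _ (add_nsmul_mem_of_add_mem hadd ha n)

lemma eq_of_mem_apery_of_le (hadd : ∀ s ∈ S, s + e ∈ S) (he : 0 < e) {a b : ℤ} (ha : a ∈ apery S e)
    (hb : b ∈ apery S e) (hab : a ≤ b) (hdvd : e ∣ b - a) : a = b := by
  obtain ⟨t, ht⟩ := hdvd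
  by_cases hlt : b - a < e
  · have : b - a = 0 := Int.eq_zero_of_dvd_of_nonneg_of_lt (by omega) hlt ⟨t, ht⟩
    omega
  · obtain ⟨n, hn⟩ := Int.eq_ofNat_of_zero_le (a := t - 1) (by nlinarith)
    have : b - e = a + n • e := by rw [nsmul_eq_mul, ← hn]; linear_combination ht
    exact absurd (this ▸ add_nsmul_mem_of_add_mem hadd ha.1 n) hb.2

lemma apery_injOn_emod (hadd : ∀ s ∈ S, s + e ∈ S) (he : 0 < e) : InjOn (· % e) (apery S e) := by
  intro a ha b hb hmod
  rcases le_total a b with hab | hba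
  · exact eq_of_mem_apery_of_le hadd he ha hb hab (Int.ModEq.dvd hmod)
  · exact (eq_of_mem_apery_of_le hadd he hb ha hba (Int.ModEq.dvd hmod.symm)).symm

lemma apery_mapsTo_emod (he : 0 < e) : MapsTo (· % e) (apery S e) (Ico 0 e) :=
  fun a _ => ⟨Int.emod_nonneg a he.ne', Int.emod_lt_of_pos a he⟩

lemma apery_finite (hadd : ∀ s ∈ S, s + e ∈ S) (he : 0 < e) : (apery S e).Finite :=
  Finite.of_injOn (apery_mapsTo_emod he) (apery_injOn_emod hadd he) (finite_Ico 0 e)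

lemma ncard_apery_le (hadd : ∀ s ∈ S, s + e ∈ S) (he : 0 < e) : (apery S e).ncard ≤ e.toNat := by
  calc (apery S e).ncard ≤ (Ico 0 e).ncard :=
        ncard_le_ncard_of_injOn _ (apery_mapsTo_emod he) (apery_injOn_emod hadd he) (finite_Ico 0 e)
    _ = e.toNat := by rw [← Finset.coe_Ico, ncard_coe_finset, Int.card_Ico, sub_zero]

end Apery

lemma AddSubmonoid.coe_closure_eq_add_self {M : Type*} [AddMonoid M] {K : Set M} (h0 : 0 ∈ K)
    (h3 : K + K + K ⊆ K + K) : (AddSubmonoid.closure K : Set M) = K + K := by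
  let T : AddSubmonoid M :=
    { carrier := K + K
      zero_mem' := ⟨0, h0, 0, h0, add_zero 0⟩
      add_mem' := by
        rintro a _ ha ⟨b, hb, c, hc, rfl⟩
        rw [← add_assoc]
        exact h3 (add_mem_add (h3 (add_mem_add ha hb)) hc) }
  refine subset_antisymm (fun x hx => AddSubmonoid.closure_le (S := T).2 ?_ hx) ?_
  · exact fun k hk => ⟨k, hk, 0, h0, add_zero k⟩
  · rintro _ ⟨a, ha, b, hb, rfl⟩
    exact add_mem (AddSubmonoid.subset_closure ha) (AddSubmonoid.subset_closure hb)

def HasMaxEmbDim (S : Set ℤ) (e : ℤ) : Prop := ({x : ℤ | IsMinGen S x}.ncard : ℤ) = e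

section MaxEmbDim

variable {S : Set ℤ} {e : ℤ}

lemma IsMinGen.sub_notMem {x : ℤ} (hx : IsMinGen S x) (he : e ∈ maxId S) (hxe : x ≠ e) :
    x - e ∉ S := fun h =>
  hx.2 ⟨x - e, mem_maxId.2 ⟨h, sub_ne_zero.2 hxe⟩, e, he, sub_add_cancel x e⟩

lemma setOf_isMinGen_subset (he : IsMult S e) :
    {x | IsMinGen S x} ⊆ insert e (apery S e \ {0}) := by
  intro x hx
  by_cases hxe : x = e
  · exact Or.inl hxe
  · have hxM := mem_maxId.1 hx.1
    exact Or.inr ⟨⟨hxM.1, hx.sub_notMem he.1 hxe⟩, hxM.2⟩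

lemma finite_insert_apery_and_ncard_le (hS : IsNumSgrp S) (he : IsMult S e) :
    (insert e (apery S e \ {0})).Finite ∧ (insert e (apery S e \ {0})).ncard ≤ e.toNat := by
  have hadd : ∀ s ∈ S, s + e ∈ S := fun s hs => hS.add_mem hs he.1.1
  have he0 := he.pos hS
  have hfin := apery_finite hadd he0
  have h0 : (0 : ℤ) ∈ apery S e := ⟨hS.zero_mem, hS.notMem_of_neg (by omega)⟩
  refine ⟨hfin.sdiff.insert e, ?_⟩
  calc (insert e (apery S e \ {0})).ncard ≤ (apery S e \ {0}).ncard + 1 :=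
        ncard_insert_le _ _
    _ = (apery S e).ncard := by
        rw [ncard_sdiff_singleton_of_mem h0]
        have := (ncard_pos hfin).2 ⟨0, h0⟩
        omega
    _ ≤ e.toNat := ncard_apery_le hadd he0

lemma setOf_isMinGen_eq (hS : IsNumSgrp S) (he : IsMult S e) (hmed : HasMaxEmbDim S e) :
    {x | IsMinGen S x} = insert e (apery S e \ {0}) := by
  obtain ⟨hfin, hcard⟩ := finite_insert_apery_and_ncard_le hS he
  refine eq_of_subset_of_ncard_le (setOf_isMinGen_subset he) ?_ hfin
  unfold HasMaxEmbDim at hmed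
  omega

lemma add_sub_mem_of_hasMaxEmbDim (hS : IsNumSgrp S) (he : IsMult S e) (hmed : HasMaxEmbDim S e)
    {m₁ m₂ : ℤ} (hm₁ : m₁ ∈ maxId S) (hm₂ : m₂ ∈ maxId S) : m₁ + m₂ - e ∈ S := by
  by_contra h
  have hm₁' := mem_maxId.1 hm₁
  have hm₂' := mem_maxId.1 hm₂
  have hsum : m₁ + m₂ ∈ {x | IsMinGen S x} := by
    rw [setOf_isMinGen_eq hS he hmed]
    have := hS.nonneg hm₁'.1
    have := hS.nonneg hm₂'.1
    exact Or.inr ⟨⟨hS.add_mem hm₁'.1 hm₂'.1, h⟩, by simp only [mem_singleton_iff]; omega⟩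
  exact hsum.2 (add_mem_add hm₁ hm₂)

lemma IsMinGen.sub_mem_PF (hS : IsNumSgrp S) (he : IsMult S e) (hmed : HasMaxEmbDim S e)
    {x : ℤ} (hx : IsMinGen S x) (hxe : x ≠ e) : x - e ∈ PF S S :=
  ⟨fun m hm => by
    rw [sub_add_eq_add_sub]
    exact add_sub_mem_of_hasMaxEmbDim hS he hmed hx.1 hm, hx.sub_notMem he.1 hxe⟩

end MaxEmbDim

section CanonicalIdeal

variable {S : Set ℤ} {F e : ℤ}

lemma zero_mem_stdK (hF : F ∉ S) : 0 ∈ stdK S F := ⟨le_rfl, by rwa [sub_zero]⟩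

lemma nonneg_of_mem_add_stdK {z : ℤ} (hz : z ∈ stdK S F + stdK S F) : 0 ≤ z := by
  obtain ⟨a, ha, b, hb, rfl⟩ := hz
  exact add_nonneg ha.1 hb.1

lemma add_mem_stdK_s9 {k p : ℤ} (hk : k ∈ stdK S F) (hp : p ∈ subI S (maxId S)) (hp0 : 0 ≤ p)
    (hkp : k + p ≠ F) : k + p ∈ stdK S F := by
  refine ⟨add_nonneg hk.1 hp0, fun h => hk.2 ?_⟩
  have := hp _ (mem_maxId.2 ⟨h, by omega⟩)
  rwa [show p + (F - (k + p)) = F - k by ring] at this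

lemma add_mem_add_stdK {y p : ℤ} (hy : y ∈ stdK S F + stdK S F) (hp : p ∈ subI S (maxId S))
    (hp0 : 0 ≤ p) (hyp : y + p < F) : y + p ∈ stdK S F + stdK S F := by
  obtain ⟨a, ha, b, hb, rfl⟩ := hy
  rw [add_assoc]
  exact add_mem_add ha (add_mem_stdK_s9 hb hp hp0 (by linarith [ha.1]))

lemma mem_stdK_of_sub_lt (he : IsMult S e) {z : ℤ} (hz : 0 ≤ z) (hlt : F - z < e) (hne : z ≠ F) :
    z ∈ stdK S F :=
  ⟨hz, he.notMem_of_lt hlt (sub_ne_zero.2 hne.symm)⟩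

lemma add_stdK_add_stdK_subset (hS : IsNumSgrp S) (he : IsMult S e) (hF : F ∉ S)
    (h2K : (stdK S F + stdK S F) \ stdK S F = {F - e, F}) :
    stdK S F + stdK S F + stdK S F ⊆ stdK S F + stdK S F := by
  have hK : stdK S F ⊆ stdK S F + stdK S F := fun k hk => ⟨k, hk, 0, zero_mem_stdK hF, add_zero k⟩
  rintro _ ⟨y, hy, c, hc, rfl⟩
  by_cases hyK : y ∈ stdK S F
  · exact add_mem_add hyK hc
  have hyF : F - e ≤ y := by
    have : y ∈ ({F - e, F} : Set ℤ) := h2K ▸ ⟨hy, hyK⟩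
    rcases this with rfl | rfl <;> linarith [he.pos hS]
  rcases hc.1.eq_or_lt with rfl | hc0
  · simpa using hy
  by_cases hyc : y + c = F
  · have : F ∈ (stdK S F + stdK S F) \ stdK S F := by rw [h2K]; simp
    exact hyc ▸ this.1
  · exact hK (mem_stdK_of_sub_lt he (by linarith [nonneg_of_mem_add_stdK hy]) (by linarith) hyc)

end CanonicalIdeal

section GeneralizedAlmostSymmetric

variable {S : Set ℤ} {F e : ℤ} {X : Finset ℤ}

lemma mult_mem_of_isGAS (hS : IsNumSgrp S) (he : IsMult S e) (hmed : HasMaxEmbDim S e)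
    (hXgen : ∀ x ∈ X, IsMinGen S x)
    (hX2K : (stdK S F + stdK S F) \ stdK S F = (fun x => F - x) '' (X : Set ℤ) ∪ {F})
    (hX : X.Nonempty) : e ∈ X := by
  obtain ⟨x, hx⟩ := hX
  by_cases hxe : x = e
  · exact hxe ▸ hx
  have he0 := he.pos hS
  have hFx : F - x ∈ (stdK S F + stdK S F) \ stdK S F := by rw [hX2K]; exact Or.inl ⟨x, hx, rfl⟩
  have hex : e ≤ x := he.2 x (hXgen x hx).1
  have hFe : F - e ∈ (stdK S F + stdK S F) \ stdK S F := by
    refine ⟨?_, fun h => h.2 (by rw [sub_sub_cancel]; exact he.1.1)⟩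
    have := add_mem_add_stdK hFx.1 ((hXgen x hx).sub_mem_PF hS he hmed hxe).1 (by omega)
      (by omega)
    rwa [show F - x + (x - e) = F - e by ring] at this
  rw [hX2K] at hFe
  rcases hFe with ⟨y, hy, hyF⟩ | hFe
  · obtain rfl : y = e := by simp only at hyF; omega
    exact hy
  · simp only [mem_singleton_iff] at hFe
    omega

lemma eq_singleton_mult_of_isGAS (hS : IsNumSgrp S) (he : IsMult S e) (hmed : HasMaxEmbDim S e)
    (hXgen : ∀ x ∈ X, IsMinGen S x) (hXpf : ∀ x ∈ X, ∀ y ∈ X, x - y ∉ PF S S)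
    (hX2K : (stdK S F + stdK S F) \ stdK S F = (fun x => F - x) '' (X : Set ℤ) ∪ {F})
    (hX : X.Nonempty) : X = {e} := by
  have heX := mult_mem_of_isGAS hS he hmed hXgen hX2K hX
  refine Finset.eq_singleton_iff_unique_mem.2 ⟨heX, fun x hx => ?_⟩
  by_contra hxe
  exact hXpf x hx e heX ((hXgen x hx).sub_mem_PF hS he hmed hxe)

end GeneralizedAlmostSymmetric

theorem stmt9 (S : Set ℤ) (hS : IsNumSgrp S) (F e : ℤ) (hF : IsFrobOf S F) (he : IsMult S e)
    (hmed : ({x : ℤ | IsMinGen S x}.ncard : ℤ) = e) (hgas : IsGAS S F) :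
    (stdK S F + stdK S F) \ stdK S F ⊆ {F} ∨
    ((genK S F \ stdK S F).ncard = 2 ∧
      (stdK S F + stdK S F) \ stdK S F = {F - e, F}) := by
  rcases hgas with h2K | ⟨X, hXgen, hXpf, hX2K⟩
  · exact Or.inl (by simp [h2K])
  rcases X.eq_empty_or_nonempty with rfl | hX
  · exact Or.inl (by simp [hX2K])
  have h2K : (stdK S F + stdK S F) \ stdK S F = {F - e, F} := by
    rw [hX2K, eq_singleton_mult_of_isGAS hS he hmed hXgen hXpf hX2K hX]
    simp [pair_comm]
  refine Or.inr ⟨?_, h2K⟩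
  rw [genK, AddSubmonoid.coe_closure_eq_add_self (zero_mem_stdK hF.1)
    (add_stdK_add_stdK_subset hS he hF.1 h2K), h2K]
  exact ncard_pair (by linarith [he.pos hS])
end

section
/- A numerical semigroup S is GAS if and only if x − y ∉ M − M for all distinct x, y ∈ M \ (S − K). -/
open Set Pointwise

/-!
Write `K` for the canonical ideal and `T = M \ (S - K)`. Reflecting through `F` identifies
`2K \ K` with `S \ (S - K)`, which is `T ∪ {0}` unless `0 ∈ S - K`, i.e. unless `2K = K`.
So `S` is GAS exactly when the elements of `T` are minimal generators with pairwise
differences outside `PF(S)`. A difference `x - y ∈ M - M` outside `PF(S)` lies in `M`, so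
`x = (x - y) + y` is not a minimal generator. Conversely, if the differences avoid
`M - M ⊇ M`, then a sum `a + b` in `T` forces `a ∈ T` with difference `b ∈ M`, and a
difference `x - y ∈ (S - M) \ (M - M)` must be `-m` for some `m ∈ M`, so `y - x ∈ M - M`.
-/

variable {S : Set ℤ} {F : ℤ}

lemma notMem_subI_iff {I J : Set ℤ} {x : ℤ} : x ∉ subI I J ↔ ∃ j ∈ J, x + j ∉ I := by
  simp [subI]

lemma IsFrobOf.le_of_notMem_s10 (hF : IsFrobOf S F) {z : ℤ} (hz : z ∉ S) : z ≤ F :=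
  not_lt.mp fun h => hz (hF.2 z h)

lemma mem_stdK_iff (hF : IsFrobOf S F) {x : ℤ} : x ∈ stdK S F ↔ F - x ∉ S :=
  ⟨And.right, fun h => ⟨by linarith [hF.le_of_notMem_s10 h], h⟩⟩

lemma subI_add_mem (hS : IsNumSgrp S) {I : Set ℤ} {a s : ℤ} (ha : a ∈ subI S I)
    (hs : s ∈ S) : a + s ∈ subI S I := fun k hk => by
  simpa only [add_right_comm] using hS.2.1 _ (ha k hk) s hs

lemma maxId_subset_subI_maxId (hS : IsNumSgrp S) : maxId S ⊆ subI (maxId S) (maxId S) :=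
  fun b ⟨hb, hb0⟩ m ⟨hm, hm0⟩ => by
    have hb_nonneg := hS.2.2.1 b hb
    have hm_nonneg := hS.2.2.1 m hm
    simp only [mem_singleton_iff] at hb0 hm0
    exact ⟨hS.2.1 b hb m hm, by simp only [mem_singleton_iff]; omega⟩

lemma diff_eq_maxId_diff_union_zero (hS : IsNumSgrp S) {A : Set ℤ} (hA : (0 : ℤ) ∉ A) :
    S \ A = maxId S \ A ∪ {0} := by
  ext x
  by_cases hx : x = 0
  · subst hx; simp [hS.1, hA]
  · simp [maxId, hx]

lemma finite_diff_subI_stdK (hS : IsNumSgrp S) (hF : IsFrobOf S F) :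
    (S \ subI S (stdK S F)).Finite := by
  refine (finite_Icc 0 F).subset fun x ⟨hx, hxK⟩ => ?_
  obtain ⟨k, hk, hxk⟩ := notMem_subI_iff.mp hxK
  exact ⟨hS.2.2.1 x hx, by linarith [hk.1, hF.le_of_notMem_s10 hxk]⟩

lemma add_stdK_diff_stdK (hF : IsFrobOf S F) :
    (stdK S F + stdK S F) \ stdK S F = (F - ·) '' (S \ subI S (stdK S F)) := by
  ext z
  constructor
  · rintro ⟨⟨a, ha, b, hb, rfl⟩, hz⟩
    refine ⟨F - (a + b), ⟨not_not.mp ((mem_stdK_iff hF).not.mp hz), fun h => ?_⟩, by ring⟩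
    have hFb : F - (a + b) + a = F - b := by ring
    exact (mem_stdK_iff hF).mp hb (hFb ▸ h a ha)
  · rintro ⟨s, ⟨hs, hsK⟩, rfl⟩
    obtain ⟨k, hk, hsk⟩ := notMem_subI_iff.mp hsK
    refine ⟨⟨k, hk, F - s - k, (mem_stdK_iff hF).mpr ?_, by ring⟩, ?_⟩
    · rwa [show F - (F - s - k) = s + k by ring]
    · rw [mem_stdK_iff hF, sub_sub_cancel, not_not]
      exact hs

lemma add_stdK_eq_self_of_zero_mem (hS : IsNumSgrp S) (hF : IsFrobOf S F)
    (h0 : (0 : ℤ) ∈ subI S (stdK S F)) : stdK S F + stdK S F = stdK S F := by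
  have hK0 : (0 : ℤ) ∈ stdK S F := (mem_stdK_iff hF).mpr (by simpa using hF.1)
  refine Subset.antisymm ?_ (subset_add_right _ hK0)
  rw [← sdiff_eq_empty, add_stdK_diff_stdK hF, image_eq_empty, sdiff_eq_empty]
  intro s hs
  simpa using subI_add_mem hS h0 hs

lemma sub_notMem_subI_maxId_of_isMinGen {X : Set ℤ} (hX : ∀ x ∈ X, IsMinGen S x)
    (hXPF : ∀ x ∈ X, ∀ y ∈ X, x - y ∉ PF S S) {x y : ℤ} (hx : x ∈ X) (hy : y ∈ X)
    (hyS : y ∈ maxId S) (hxy : x ≠ y) : x - y ∉ subI (maxId S) (maxId S) := fun hMM => by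
  have hxyS : x - y ∈ S := not_not.mp fun h => hXPF x hx y hy ⟨fun m hm => (hMM m hm).1, h⟩
  refine (hX x hx).2 ⟨x - y, ⟨hxyS, ?_⟩, y, hyS, by ring⟩
  simpa [sub_eq_zero] using hxy

lemma isMinGen_of_pairwise (hS : IsNumSgrp S) {I : Set ℤ}
    (hA : (maxId S \ subI S I).Pairwise fun x y => x - y ∉ subI (maxId S) (maxId S))
    {x : ℤ} (hx : x ∈ maxId S \ subI S I) : IsMinGen S x := by
  refine ⟨hx.1, ?_⟩
  rintro ⟨a, ha, b, hb, rfl⟩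
  have haA : a ∈ maxId S \ subI S I := ⟨ha, fun h => hx.2 (subI_add_mem hS h hb.1)⟩
  have hb0 : b ≠ 0 := hb.2
  refine hA hx haA (by simpa using hb0) ?_
  simpa using maxId_subset_subI_maxId hS hb

lemma sub_notMem_PF_of_pairwise (hS : IsNumSgrp S) {A : Set ℤ}
    (hA : A.Pairwise fun x y => x - y ∉ subI (maxId S) (maxId S)) {x y : ℤ} (hx : x ∈ A)
    (hy : y ∈ A) : x - y ∉ PF S S := by
  rintro ⟨hSM, hxyS⟩
  by_cases hxy : x = y
  · exact hxyS (by simpa [hxy] using hS.1)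
  obtain ⟨m, hm, hxym⟩ := notMem_subI_iff.mp (hA hx hy hxy)
  -- `x - y + m ∈ S \ M` forces `x - y = -m`
  have hyx : y - x = m := by
    by_contra h
    exact hxym ⟨hSM m hm, by simp only [mem_singleton_iff]; omega⟩
  exact hA hy hx (Ne.symm hxy) (hyx ▸ maxId_subset_subI_maxId hS hm)

lemma diff_subI_stdK_eq_union_zero (hF : IsFrobOf S F) {X : Set ℤ}
    (hX : (stdK S F + stdK S F) \ stdK S F = (F - ·) '' X ∪ {F}) :
    S \ subI S (stdK S F) = X ∪ {0} := by
  apply image_injective.mpr (sub_right_injective (b := F))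
  rw [← add_stdK_diff_stdK hF, hX, image_union, image_singleton, sub_zero]

theorem stmt10 (S : Set ℤ) (hS : IsNumSgrp S) (F : ℤ) (hF : IsFrobOf S F) :
    IsGAS S F ↔ ∀ x ∈ maxId S \ subI S (stdK S F), ∀ y ∈ maxId S \ subI S (stdK S F),
      x ≠ y → x - y ∉ subI (maxId S) (maxId S) := by
  have hT : maxId S \ subI S (stdK S F) ⊆ S \ subI S (stdK S F) :=
    sdiff_subset_sdiff_left sdiff_subset
  constructor
  · rintro (h2K | ⟨X, hXgen, hXPF, hXeq⟩) x hx y hy hxy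
    · have hempty : S \ subI S (stdK S F) = ∅ := by
        rw [← image_eq_empty, ← add_stdK_diff_stdK hF, h2K, sdiff_self]
      exact absurd (hT hx) (hempty ▸ notMem_empty x)
    · have hTX : ∀ z ∈ maxId S \ subI S (stdK S F), z ∈ X := fun z hz => by
        have hz' := hT hz
        rw [diff_subI_stdK_eq_union_zero hF hXeq] at hz'
        exact hz'.resolve_right hz.1.2
      exact sub_notMem_subI_maxId_of_isMinGen hXgen hXPF (hTX x hx) (hTX y hy) hy.1 hxy
  · intro h
    by_cases h0 : (0 : ℤ) ∈ subI S (stdK S F)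
    · exact Or.inl (add_stdK_eq_self_of_zero_mem hS hF h0)
    have hfin := (finite_diff_subI_stdK hS hF).subset hT
    refine Or.inr ⟨hfin.toFinset, fun x hx => ?_, fun x hx y hy => ?_, ?_⟩
    · exact isMinGen_of_pairwise hS h (hfin.mem_toFinset.mp hx)
    · exact sub_notMem_PF_of_pairwise hS h (hfin.mem_toFinset.mp hx) (hfin.mem_toFinset.mp hy)
    · rw [hfin.coe_toFinset, add_stdK_diff_stdK hF, diff_eq_maxId_diff_union_zero hS h0,
        image_union, image_singleton, sub_zero]
end

section
/- For a numerical semigroup S with multiplicity e and maximal ideal M, viewing M − e as a relative ideal of the numerical semigroup M − M, one has F(M − M) = F(M − e) = F(S) − e, and K(M − M) \ (M − e) = {x − e : x ∈ L(S) and F(S) − x ∉ PF(S)}. -/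
open Set Pointwise

/-
The Frobenius statements are translation bookkeeping: shifting by the least element e of M moves
the last gap F of S to F - e, both for M - M and for M - e. For the last identity, the point is
that M - M = S - M as soon as S ≠ ℕ: if z + m = 0 for some m ∈ M, then z + (F + m) = F is a gap.
Since S - M = S ∪ PF(S), the condition F - e - y ∉ M - M says F - x ∉ S and F - x ∉ PF(S) for
x = y + e, and the sign conditions on y and x are forced by minimality of e.
-/

lemma mem_image_sub_iff {I : Set ℤ} {e y : ℤ} : y ∈ (fun m => m - e) '' I ↔ y + e ∈ I :=
  ⟨fun ⟨m, hm, hy⟩ => by rwa [← hy, sub_add_cancel], fun h => ⟨y + e, h, add_sub_cancel_right y e⟩⟩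

lemma IsFrobOf.image_sub {I : Set ℤ} {F : ℤ} (hI : IsFrobOf I F) (e : ℤ) :
    IsFrobOf ((fun m => m - e) '' I) (F - e) := by
  refine ⟨fun h => hI.1 ?_, fun z hz => mem_image_sub_iff.2 (hI.2 _ (by omega))⟩
  simpa using mem_image_sub_iff.1 h

lemma IsFrobOf.subI {I J : Set ℤ} {F e : ℤ} (hI : IsFrobOf I F) (he : e ∈ J)
    (hmin : ∀ j ∈ J, e ≤ j) : IsFrobOf (subI I J) (F - e) := by
  refine ⟨fun h => hI.1 ?_, fun z hz j hj => hI.2 _ (by linarith [hmin j hj])⟩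
  simpa using h e he

lemma le_sub_of_notMem_subI {I J : Set ℤ} {F e z : ℤ} (hI : ∀ z, F < z → z ∈ I)
    (hmin : ∀ j ∈ J, e ≤ j) (hz : z ∉ subI I J) : z ≤ F - e := by
  simp only [subI, mem_ofPred_eq, not_forall] at hz
  obtain ⟨j, hj, hzj⟩ := hz
  have := hmin j hj
  by_contra! h
  exact hzj (hI _ (by omega))

section NumSgrp

variable {S : Set ℤ} {F : ℤ}

lemma mem_maxId_of_lt (hF : IsFrobOf S F) (hFpos : 0 < F) {z : ℤ} (hz : F < z) :
    z ∈ maxId S :=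
  ⟨hF.2 z hz, fun h => by rw [mem_singleton_iff] at h; omega⟩

lemma IsFrobOf.maxId (hF : IsFrobOf S F) (hFpos : 0 < F) : IsFrobOf (maxId S) F :=
  ⟨fun h => hF.1 h.1, fun _ => mem_maxId_of_lt hF hFpos⟩

lemma subI_self_maxId_eq_union_PF (hadd : ∀ a ∈ S, ∀ b ∈ S, a + b ∈ S) :
    subI S (maxId S) = S ∪ PF S S := by
  have hS : S ⊆ subI S (maxId S) := fun a ha m hm => hadd a ha m hm.1
  rw [PF, union_sdiff_self, union_eq_right.2 hS]

lemma subI_maxId_maxId_eq (hnn : ∀ a ∈ S, 0 ≤ a) (hF : IsFrobOf S F) (hFpos : 0 < F) :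
    subI (maxId S) (maxId S) = subI S (maxId S) := by
  refine Subset.antisymm (fun z hz m hm => (hz m hm).1) fun z hz m hm => ⟨hz m hm, fun h0 => ?_⟩
  have hm0 : 0 < m := lt_of_le_of_ne (hnn m hm.1) (Ne.symm hm.2)
  have := hz (F + m) (mem_maxId_of_lt hF hFpos (by omega))
  rw [mem_singleton_iff] at h0
  exact hF.1 (by rwa [show z + (F + m) = F by omega] at this)

end NumSgrp

theorem stmt16 (S : Set ℤ) (hS : IsNumSgrp S) (F e : ℤ) (hF : IsFrobOf S F) (hFpos : 0 < F)
    (he : IsMult S e) :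
    IsFrobOf (subI (maxId S) (maxId S)) (F - e) ∧
    IsFrobOf ((fun m => m - e) '' maxId S) (F - e) ∧
    stdK (subI (maxId S) (maxId S)) (F - e) \ ((fun m => m - e) '' maxId S) =
      (fun x => x - e) '' {x : ℤ | x ∉ S ∧ F - x ∉ S ∧ F - x ∉ PF S S} := by
  obtain ⟨-, hadd, hnn, -⟩ := hS
  obtain ⟨heM, hmin⟩ := he
  have he0 : 0 < e := lt_of_le_of_ne (hnn e heM.1) (Ne.symm heM.2)
  refine ⟨(hF.maxId hFpos).subI heM hmin, (hF.maxId hFpos).image_sub e, ?_⟩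
  have hT : subI (maxId S) (maxId S) = S ∪ PF S S := by
    rw [subI_maxId_maxId_eq hnn hF hFpos, subI_self_maxId_eq_union_PF hadd]
  have hgap : ∀ z, z ∉ S ∪ PF S S → z ≤ F - e := fun z hz =>
    le_sub_of_notMem_subI hF.2 hmin (by rwa [← subI_self_maxId_eq_union_PF hadd] at hz)
  ext y
  simp only [hT, stdK, mem_sdiff, mem_ofPred_eq, mem_image_sub_iff, mem_union, not_or] at hgap ⊢
  rw [show F - e - y = F - (y + e) by ring]
  constructor
  · rintro ⟨⟨hy, hS, hPF⟩, hM⟩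
    exact ⟨fun h => hM ⟨h, by rw [mem_singleton_iff]; omega⟩, hS, hPF⟩
  · rintro ⟨hx, hS, hPF⟩
    have := hgap _ ⟨hS, hPF⟩
    exact ⟨⟨by omega, hS, hPF⟩, fun h => hx h.1⟩
end

section
/- Let S be a numerical semigroup of type 2 that is not almost symmetric, with PF(S) = {f, F(S)}. Then S is GAS if and only if F(S) = 2f − x for some minimal generator x of S. Moreover, in this case, if n is the minimum integer with n(F(S) − f) ∈ S, then |2K \ K| = 2, |rK \ (r−1)K| = 1 for all 3 ≤ r ≤ n − 1, and nK = (n−1)K. -/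
open Set Pointwise

/-!
Put `d = F - f`. Every gap of a numerical semigroup lies below a pseudo-Frobenius number, so
each gap `g` has `f - g ∈ S` or `F - g ∈ S`. Hence `K = S ∪ (d + S)` and
`rK = ⋃_{i ≤ r} (i d + S)`, so `z` is new in `rK` exactly when `z - r d ∈ S` and
`z - i d ∉ S` for `i < r`. The element `x = 2f - F = f - d` lies in `S`, and it is nonzero
because `F = 2f` would make `S` almost symmetric. If `s ∈ S` and `d + s ∉ S`, then the gap
`d + s` forces `x - s ∈ S`; so when `x` is a minimal generator, `s ∈ {0, x}`. This makes
`2K \ K = {2d, F}` and `rK \ (r-1)K = {r d}` for `3 ≤ r < n`, while `2d ∈ 2K \ K` forces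
`x` to be a minimal generator for any GAS semigroup. Finally `nK = (n-1)K` because `n d ∈ S`.
-/

lemma IsNumSgrp.zero_mem_s19 {S : Set ℤ} (hS : IsNumSgrp S) : 0 ∈ S := hS.1

lemma IsNumSgrp.nonneg_s19 {S : Set ℤ} (hS : IsNumSgrp S) {a : ℤ} (ha : a ∈ S) : 0 ≤ a :=
  hS.2.2.1 a ha

lemma IsNumSgrp.add_mem_s19 {S : Set ℤ} (hS : IsNumSgrp S) {a b : ℤ} (ha : a ∈ S) (hb : b ∈ S) :
    a + b ∈ S :=
  hS.2.1 a ha b hb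

lemma IsNumSgrp.add_mem_subI_maxId {S : Set ℤ} (hS : IsNumSgrp S) {x s : ℤ}
    (hx : x ∈ subI S (maxId S)) (hs : s ∈ S) : x + s ∈ subI S (maxId S) := fun j hj => by
  rw [add_right_comm]
  exact hS.add_mem_s19 (hx j hj) hs

lemma IsNumSgrp.mem_subI_maxId {S : Set ℤ} (hS : IsNumSgrp S) {s : ℤ} (hs : s ∈ S) :
    s ∈ subI S (maxId S) := fun _ hj => hS.add_mem_s19 hs hj.1

lemma IsNumSgrp.exists_mem_PF_sub_mem {S : Set ℤ} (hS : IsNumSgrp S) {g : ℤ} (hg : g ∉ S) :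
    ∃ p ∈ PF S S, p - g ∈ S := by
  obtain ⟨c, hc⟩ := hS.2.2.2
  suffices ∀ k : ℕ, ∀ g ∉ S, c - g ≤ k → ∃ p ∈ PF S S, p - g ∈ S from
    this (c - g).toNat g hg (Int.self_le_toNat _)
  intro k
  induction k with
  | zero => exact fun g hg hk => absurd (hc g (by omega)) hg
  | succ k ih =>
    intro g hg hk
    by_cases hgM : g ∈ subI S (maxId S)
    · exact ⟨g, ⟨hgM, hg⟩, by simpa using hS.zero_mem_s19⟩
    · obtain ⟨m, ⟨hmS, hm0⟩, hgm⟩ : ∃ m ∈ maxId S, g + m ∉ S := by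
        simpa [subI] using hgM
      have hm : 0 < m := lt_of_le_of_ne (hS.nonneg_s19 hmS) (Ne.symm hm0)
      obtain ⟨p, hp, hpS⟩ := ih (g + m) hgm (by omega)
      exact ⟨p, hp, by convert hS.add_mem_s19 hpS hmS using 1; ring⟩

section ShiftedUnion

variable {S : Set ℤ} {d : ℤ}

lemma mem_nK_succ_iff (h0 : 0 ∈ S) (hadd : ∀ a ∈ S, ∀ b ∈ S, a + b ∈ S) (r : ℕ)
    (z : ℤ) :
    z ∈ nK {z | z ∈ S ∨ z - d ∈ S} (r + 1) ↔ ∃ i ≤ r + 1, z - i * d ∈ S := by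
  induction r generalizing z with
  | zero =>
    refine ⟨?_, fun ⟨i, hi, hz⟩ => ?_⟩
    · rintro (hz | hz)
      exacts [⟨0, by omega, by simpa using hz⟩, ⟨1, le_rfl, by simpa using hz⟩]
    · interval_cases i
      exacts [Or.inl (by simpa using hz), Or.inr (by simpa using hz)]
  | succ m ih =>
    change z ∈ nK _ (m + 1) + _ ↔ _
    rw [Set.mem_add]
    constructor
    · rintro ⟨a, ha, b, hb, rfl⟩
      obtain ⟨i, hi, hai⟩ := (ih a).1 ha
      rcases hb with hb | hb
      · exact ⟨i, by omega, by convert hadd _ hai _ hb using 1; ring⟩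
      · exact ⟨i + 1, by omega, by convert hadd _ hai _ hb using 1; push_cast; ring⟩
    · rintro ⟨i, hi, hz⟩
      rcases (show i ≤ m + 1 ∨ i = m + 2 by omega) with hi | rfl
      · exact ⟨z, (ih z).2 ⟨i, hi, hz⟩, 0, Or.inl h0, add_zero z⟩
      · refine ⟨z - d, (ih _).2 ⟨m + 1, le_rfl, ?_⟩, d, Or.inr (by simpa using h0),
          by ring⟩
        convert hz using 1; push_cast; ring

lemma mem_nK_sdiff_iff (h0 : 0 ∈ S) (hadd : ∀ a ∈ S, ∀ b ∈ S, a + b ∈ S) (r : ℕ)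
    (z : ℤ) :
    z ∈ nK {z | z ∈ S ∨ z - d ∈ S} (r + 2) \ nK {z | z ∈ S ∨ z - d ∈ S} (r + 1) ↔
      z - (r + 2 : ℕ) * d ∈ S ∧ ∀ i ≤ r + 1, z - i * d ∉ S := by
  rw [Set.mem_sdiff, mem_nK_succ_iff h0 hadd r]
  refine (and_congr_left fun hnew => ?_).trans (and_congr_right fun _ => by simp)
  refine (mem_nK_succ_iff h0 hadd (r + 1) z).trans
    ⟨fun ⟨i, hi, hz⟩ => ?_, fun hz => ⟨_, le_rfl, hz⟩⟩
  rcases (show i ≤ r + 1 ∨ i = r + 2 by omega) with hi | rfl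
  exacts [absurd ⟨i, hi, hz⟩ hnew, hz]

lemma nK_succ_eq_of_mul_mem (h0 : 0 ∈ S) (hadd : ∀ a ∈ S, ∀ b ∈ S, a + b ∈ S) (r : ℕ)
    (hr : ((r + 2 : ℕ) : ℤ) * d ∈ S) :
    nK {z | z ∈ S ∨ z - d ∈ S} (r + 2) = nK {z | z ∈ S ∨ z - d ∈ S} (r + 1) := by
  ext z
  rw [mem_nK_succ_iff h0 hadd (r + 1), mem_nK_succ_iff h0 hadd r]
  refine ⟨fun ⟨i, hi, hz⟩ => ?_, fun ⟨i, hi, hz⟩ => ⟨i, by omega, hz⟩⟩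
  rcases (show i ≤ r + 1 ∨ i = r + 2 by omega) with hi | rfl
  · exact ⟨i, hi, hz⟩
  · exact ⟨0, by omega, by convert hadd _ hz _ hr using 1; push_cast; ring⟩

end ShiftedUnion

structure IsTypeTwo (S : Set ℤ) (F f : ℤ) : Prop where
  numSgrp : IsNumSgrp S
  frob : IsFrobOf S F
  pf_eq : PF S S = {f, F}
  ne : f ≠ F

namespace IsTypeTwo

variable {S : Set ℤ} {F f : ℤ}

lemma f_mem_PF (h : IsTypeTwo S F f) : f ∈ PF S S := h.pf_eq ▸ Set.mem_insert f {F}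

lemma F_mem_PF (h : IsTypeTwo S F f) : F ∈ PF S S := h.pf_eq ▸ Set.mem_insert_of_mem f rfl

lemma f_not_mem (h : IsTypeTwo S F f) : f ∉ S := h.f_mem_PF.2

lemma f_le (h : IsTypeTwo S F f) : f ≤ F :=
  le_of_not_gt fun hlt => h.f_not_mem (h.frob.2 f hlt)

lemma sub_mem_or_sub_mem (h : IsTypeTwo S F f) {g : ℤ} (hg : g ∉ S) :
    f - g ∈ S ∨ F - g ∈ S := by
  obtain ⟨p, hp, hpg⟩ := h.numSgrp.exists_mem_PF_sub_mem hg
  rw [h.pf_eq] at hp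
  rcases hp with rfl | rfl
  exacts [Or.inl hpg, Or.inr hpg]

lemma sub_not_mem (h : IsTypeTwo S F f) : F - f ∉ S := fun hd => by
  have hd0 : F - f ∈ maxId S := ⟨hd, fun h0 => h.ne (by simp at h0; omega)⟩
  exact h.frob.1 (by simpa using h.f_mem_PF.1 _ hd0)

lemma two_mul_sub_mem (h : IsTypeTwo S F f) : 2 * f - F ∈ S := by
  rcases h.sub_mem_or_sub_mem h.sub_not_mem with hx | hf
  · convert hx using 1; ring
  · exact absurd (by simpa using hf) h.f_not_mem

lemma two_mul_sub_not_mem (h : IsTypeTwo S F f) : 2 * (F - f) ∉ S := fun hd =>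
  h.frob.1 (by convert h.numSgrp.add_mem_s19 h.two_mul_sub_mem hd using 1; ring)

lemma stdK_eq (h : IsTypeTwo S F f) : stdK S F = {z | z ∈ S ∨ z - (F - f) ∈ S} := by
  ext z
  refine ⟨fun ⟨_, hz⟩ => ?_, ?_⟩
  · rcases h.sub_mem_or_sub_mem hz with hz | hz
    · exact Or.inr (by convert hz using 1; ring)
    · exact Or.inl (by simpa using hz)
  · rintro (hz | hz)
    · refine ⟨h.numSgrp.nonneg_s19 hz, fun hFz => h.frob.1 ?_⟩
      simpa using h.numSgrp.add_mem_s19 hFz hz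
    · refine ⟨by linarith [h.numSgrp.nonneg_s19 hz, h.f_le], fun hFz => h.f_not_mem ?_⟩
      convert h.numSgrp.add_mem_s19 hFz hz using 1; ring

lemma isAlmostSym_of_eq_two_mul (h : IsTypeTwo S F f) (hF : F = 2 * f) : IsAlmostSym S F := by
  have hd : F - f = f := by omega
  ext z
  rw [h.stdK_eq, hd]
  constructor
  · intro hz
    by_cases hzS : z ∈ S
    · exact Or.inl (Or.inl hzS)
    · have hzPF : z ∈ PF S S := ⟨hz, hzS⟩
      rw [h.pf_eq] at hzPF
      rcases hzPF with rfl | rfl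
      exacts [Or.inl (Or.inr (by simpa using h.numSgrp.zero_mem_s19)), Or.inr rfl]
  · rintro ((hz | hz) | rfl)
    · exact h.numSgrp.mem_subI_maxId hz
    · simpa using h.numSgrp.add_mem_subI_maxId h.f_mem_PF.1 hz
    · exact h.F_mem_PF.1

lemma eq_zero_or_eq_of_add_not_mem (h : IsTypeTwo S F f) (hx : IsMinGen S (2 * f - F)) {s : ℤ}
    (hs : s ∈ S) (hds : F - f + s ∉ S) : s = 0 ∨ s = 2 * f - F := by
  by_contra! hne
  rcases h.sub_mem_or_sub_mem hds with hxs | hfs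
  · have hxs' : 2 * f - F - s ∈ maxId S :=
      ⟨by convert hxs using 1; ring, fun h0 => hne.2 (by simp at h0; omega)⟩
    exact hx.2 ⟨s, ⟨hs, hne.1⟩, _, hxs', by ring⟩
  · exact h.f_not_mem (by convert h.numSgrp.add_mem_s19 hfs hs using 1; ring)

lemma two_mul_sub_mem_stdK_add_sdiff (h : IsTypeTwo S F f) :
    2 * (F - f) ∈ (stdK S F + stdK S F) \ stdK S F := by
  rw [h.stdK_eq]
  refine (mem_nK_sdiff_iff h.numSgrp.zero_mem_s19 h.numSgrp.2.1 0 _).2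
    ⟨by simpa using h.numSgrp.zero_mem_s19, ?_⟩
  intro i hi
  interval_cases i
  · simpa using h.two_mul_sub_not_mem
  · convert h.sub_not_mem using 2; ring

lemma stdK_add_sdiff_eq (h : IsTypeTwo S F f) (hx : IsMinGen S (2 * f - F)) :
    (stdK S F + stdK S F) \ stdK S F = {2 * (F - f), F} := by
  ext z
  refine ⟨fun hz => ?_, ?_⟩
  · rw [h.stdK_eq] at hz
    obtain ⟨hz2, hnew⟩ := (mem_nK_sdiff_iff h.numSgrp.zero_mem_s19 h.numSgrp.2.1 0 z).1 hz
    have hz1 : F - f + (z - 2 * (F - f)) ∉ S := by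
      convert hnew 1 le_rfl using 2; push_cast; ring
    rcases h.eq_zero_or_eq_of_add_not_mem hx (by simpa using hz2) hz1 with hs | hs
    exacts [Or.inl (by omega), Or.inr (Set.mem_singleton_iff.2 (by omega))]
  · rintro (rfl | rfl)
    · exact h.two_mul_sub_mem_stdK_add_sdiff
    · rw [h.stdK_eq]
      refine (mem_nK_sdiff_iff h.numSgrp.zero_mem_s19 h.numSgrp.2.1 0 _).2 ⟨?_, fun i hi => ?_⟩
      · convert h.two_mul_sub_mem using 1; push_cast; ring
      · interval_cases i
        · simpa using h.frob.1
        · simpa using h.f_not_mem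

lemma nK_sdiff_eq_singleton (h : IsTypeTwo S F f) (hx : IsMinGen S (2 * f - F)) (r : ℕ)
    (hmin : ∀ m : ℕ, 0 < m → m ≤ r + 3 → (m : ℤ) * (F - f) ∉ S) :
    nK (stdK S F) (r + 3) \ nK (stdK S F) (r + 2) = {((r + 3 : ℕ) : ℤ) * (F - f)} := by
  ext z
  rw [h.stdK_eq, Set.mem_singleton_iff]
  refine (mem_nK_sdiff_iff h.numSgrp.zero_mem_s19 h.numSgrp.2.1 (r + 1) z).trans
    ⟨fun ⟨hz, hnew⟩ => ?_, ?_⟩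
  · have hz' : z - (r + 3 : ℤ) * (F - f) ∈ S := by convert hz using 2; push_cast; ring
    have hz1 : F - f + (z - (r + 3 : ℤ) * (F - f)) ∉ S := by
      convert hnew (r + 2) (by omega) using 2; push_cast; ring
    rcases h.eq_zero_or_eq_of_add_not_mem hx hz' hz1 with hs | hs
    · push_cast; linarith
    · refine absurd (h.frob.2 _ ?_) (hnew r (by omega))
      linarith [lt_of_le_of_ne h.f_le h.ne]
  · rintro rfl
    refine ⟨by convert h.numSgrp.zero_mem_s19 using 1; push_cast; ring, fun i hi => ?_⟩
    convert hmin (r + 3 - i) (by omega) (by omega) using 2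
    push_cast [Nat.cast_sub (by omega : i ≤ r + 3)]
    ring

lemma isMinGen_of_isGAS (h : IsTypeTwo S F f) (hF : F ≠ 2 * f) (hgas : IsGAS S F) :
    IsMinGen S (2 * f - F) := by
  have hd := h.two_mul_sub_mem_stdK_add_sdiff
  rcases hgas with h2K | ⟨X, hXgen, -, hXeq⟩
  · rw [h2K, Set.sdiff_self] at hd
    exact hd.elim
  · rw [hXeq] at hd
    rcases hd with ⟨x, hxX, hxd⟩ | hd
    · convert hXgen x hxX using 1
      simp only at hxd
      omega
    · exact absurd (Set.mem_singleton_iff.1 hd) (by omega)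

lemma isGAS_of_isMinGen (h : IsTypeTwo S F f) (hx : IsMinGen S (2 * f - F)) : IsGAS S F := by
  refine Or.inr ⟨{2 * f - F}, by simpa using hx, fun x hx y hy => ?_, ?_⟩
  · rw [Finset.mem_singleton] at hx hy
    rw [hx, hy, sub_self]
    exact fun h0 => h0.2 h.numSgrp.zero_mem_s19
  · rw [h.stdK_add_sdiff_eq hx, Finset.coe_singleton, Set.image_singleton, Set.singleton_union]
    congr 1
    ring

lemma three_le_of_mul_mem (h : IsTypeTwo S F f) {n : ℕ} (hn : 0 < n)
    (hnd : (n : ℤ) * (F - f) ∈ S) : 3 ≤ n := by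
  rcases (show n = 1 ∨ n = 2 ∨ 3 ≤ n by omega) with rfl | rfl | hn3
  · exact absurd (by simpa using hnd) h.sub_not_mem
  · exact absurd (by simpa using hnd) h.two_mul_sub_not_mem
  · exact hn3

end IsTypeTwo

theorem stmt19 (S : Set ℤ) (hS : IsNumSgrp S) (F f : ℤ) (hF : IsFrobOf S F)
    (hPF : PF S S = {f, F}) (hfF : f ≠ F) (hnas : ¬ IsAlmostSym S F) :
    (IsGAS S F ↔ ∃ x : ℤ, IsMinGen S x ∧ F = 2 * f - x) ∧
    (IsGAS S F → ∀ n : ℕ, 0 < n → (n : ℤ) * (F - f) ∈ S →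
      (∀ m : ℕ, 0 < m → m < n → (m : ℤ) * (F - f) ∉ S) →
      ((nK (stdK S F) 2 \ stdK S F).ncard = 2 ∧
       (∀ r : ℕ, 3 ≤ r → r ≤ n - 1 →
          (nK (stdK S F) r \ nK (stdK S F) (r - 1)).ncard = 1) ∧
       nK (stdK S F) n = nK (stdK S F) (n - 1))) := by
  have h : IsTypeTwo S F f := ⟨hS, hF, hPF, hfF⟩
  have hF2 : F ≠ 2 * f := fun hF2 => hnas (h.isAlmostSym_of_eq_two_mul hF2)
  refine ⟨⟨fun hgas => ⟨_, h.isMinGen_of_isGAS hF2 hgas, by ring⟩, ?_⟩, ?_⟩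
  · rintro ⟨x, hx, hFx⟩
    obtain rfl : x = 2 * f - F := by omega
    exact h.isGAS_of_isMinGen hx
  intro hgas n hn hnd hmin
  have hx := h.isMinGen_of_isGAS hF2 hgas
  have hn3 := h.three_le_of_mul_mem hn hnd
  obtain ⟨n, rfl⟩ : ∃ m, n = m + 3 := ⟨n - 3, by omega⟩
  refine ⟨?_, fun r hr3 hrn => ?_, ?_⟩
  · rw [show nK (stdK S F) 2 = stdK S F + stdK S F from rfl, h.stdK_add_sdiff_eq hx,
      Set.ncard_pair (by omega)]
  · obtain ⟨r, rfl⟩ : ∃ k, r = k + 3 := ⟨r - 3, by omega⟩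
    rw [show r + 3 - 1 = r + 2 from rfl, h.nK_sdiff_eq_singleton hx r
      (fun m hm hmr => hmin m hm (by omega)), Set.ncard_singleton]
  · rw [h.stdK_eq]
    exact nK_succ_eq_of_mul_mem hS.zero_mem_s19 hS.2.1 (n + 1) hnd
end
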